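/- arXiv:2404.18037 — 3 statements merged into one kernel-verified Lean document; each statement's English description precedes it below -/
import Mathlib

section
/- For any cubic polynomial u and uniform cells of width h, the stencil −(1/24)ū_{i−2} + (5/12)ū_{i−1} + (5/6)ū_i − (1/4)ū_{i+1} + (1/24)ū_{i+2} applied to cell averages exactly recovers u at the left endpoint of the middle cell. -/
open intervalIntegral

theorem Polynomial.integral_eval_eq_sum_range {p : Polynomial ℝ} {n : ℕ} (hn : p.natDegree < n)
    (a b : ℝ) :
    ∫ t in a..b, p.eval t =
      ∑ i ∈ Finset.range n, p.coeff i * ((b ^ (i + 1) - a ^ (i + 1)) / (i + 1)) := by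
  simp_rw [Polynomial.eval_eq_sum_range' hn]
  rw [integral_finsetSum fun i _ => (by fun_prop : Continuous _).intervalIntegrable a b]
  simp only [integral_const_mul, integral_pow]

/-- The degree-3 conservative interpolation stencil is exact for cubic polynomials:
`-(1/24)ū_{i-2} + (5/12)ū_{i-1} + (5/6)ū_i - (1/4)ū_{i+1} + (1/24)ū_{i+2} = u(x - h/2)`. -/
theorem stencil_deg3_exact (u : Polynomial ℝ) (hu : u.degree ≤ 3)
    (x h : ℝ) (hh : 0 < h) :
    -(1/24) * ((∫ t in (x - 5*h/2)..(x - 3*h/2), u.eval t) / h)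
      + (5/12) * ((∫ t in (x - 3*h/2)..(x - h/2), u.eval t) / h)
      + (5/6) * ((∫ t in (x - h/2)..(x + h/2), u.eval t) / h)
      - (1/4) * ((∫ t in (x + h/2)..(x + 3*h/2), u.eval t) / h)
      + (1/24) * ((∫ t in (x + 3*h/2)..(x + 5*h/2), u.eval t) / h)
      = u.eval (x - h/2) := by
  have hdeg : u.natDegree < 4 := Nat.lt_succ_of_le (Polynomial.natDegree_le_of_degree_le hu)
  simp only [Polynomial.integral_eval_eq_sum_range hdeg]
  simp only [Polynomial.eval_eq_sum_range' hdeg, Finset.sum_range_succ, Finset.sum_range_zero]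
  field_simp
  ring
end

section
/- For any cubic polynomial u and uniform spacing h, the integral of u over [x−h/2, x+h/2] equals h times (1/24)u(x−h) + (11/12)u(x) + (1/24)u(x+h). -/
open intervalIntegral

/-- The transverse flux integral stencil is exact for cubic polynomials:
`∫_{x-h/2}^{x+h/2} u = h * ((1/24)u(x-h) + (11/12)u(x) + (1/24)u(x+h))`. -/
theorem transverse_integral_stencil_exact (u : Polynomial ℝ) (hu : u.degree ≤ 3)
    (x h : ℝ) (hh : 0 < h) :
    (∫ t in (x - h/2)..(x + h/2), u.eval t)
      = h * ((1/24) * u.eval (x - h) + (11/12) * u.eval x + (1/24) * u.eval (x + h)) := by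
  have hnd : u.natDegree < 4 := by
    by_cases h0 : u = 0
    · simp [h0]
    · have := Polynomial.natDegree_le_iff_degree_le.mpr hu
      exact_mod_cast lt_of_le_of_lt this (by norm_num)
  have heval : ∀ t : ℝ, u.eval t = ∑ i ∈ Finset.range 4, u.coeff i * t ^ i := fun t =>
    Polynomial.eval_eq_sum_range' hnd t
  simp only [heval]
  rw [intervalIntegral.integral_finset_sum]
  · simp only [intervalIntegral.integral_const_mul, integral_pow]
    simp only [Finset.sum_range_succ, Finset.sum_range_zero]
    ring
  · intro i _
    exact (intervalIntegrable_pow i).const_mul _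
end

section
/- Let P be a continuous function on a set S containing values on both sides of ū, with M' = max_{x∈S} P(x), m' = min_{x∈S} P(x), and m' ≤ ū ≤ M'. If m ≤ ū ≤ M, M' > ū, m' < ū, and θ = min((M−ū)/(M'−ū), (ū−m)/(ū−m'), 1), then the limited function P̃(x) = θ(P(x)−ū)+ū satisfies m ≤ P̃(x) ≤ M for all x ∈ S. -/
/-! The limited value `θ (p - ū) + ū` is affine and nondecreasing in `p` for `θ ≥ 0`, so on `S` it
lies between its values at `m'` and `M'`; the two quotients in the definition of `θ` are exactly
what keeps these extreme values inside `[m, M]`. -/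

section Limiter

variable {𝕜 : Type*} [Field 𝕜] [LinearOrder 𝕜] [IsStrictOrderedRing 𝕜]

lemma mul_sub_add_le_of_le_div {θ u p M M' : 𝕜} (hθ : 0 ≤ θ) (hu : u < M') (hp : p ≤ M')
    (h : θ ≤ (M - u) / (M' - u)) : θ * (p - u) + u ≤ M :=
  calc θ * (p - u) + u ≤ θ * (M' - u) + u := by gcongr
    _ ≤ M := by linarith [(le_div_iff₀ (sub_pos.2 hu)).1 h]

lemma le_mul_sub_add_of_le_div {θ u p m m' : 𝕜} (hθ : 0 ≤ θ) (hu : m' < u) (hp : m' ≤ p)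
    (h : θ ≤ (u - m) / (u - m')) : m ≤ θ * (p - u) + u :=
  calc m ≤ θ * (m' - u) + u := by linarith [(le_div_iff₀ (sub_pos.2 hu)).1 h]
    _ ≤ θ * (p - u) + u := by gcongr

end Limiter

theorem zhang_shu_limited_values_in_bounds_general
    (S : Set ℝ) (P : ℝ → ℝ)
    (ubar m M m' M' : ℝ)
    (hM' : IsGreatest (P '' S) M') (hm' : IsLeast (P '' S) m')
    (hm : m ≤ ubar) (hM : ubar ≤ M)
    (hMgt : M' > ubar) (hmlt : m' < ubar) :
    ∀ x ∈ S,
      m ≤ min (min ((M - ubar) / (M' - ubar)) ((ubar - m) / (ubar - m'))) 1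
            * (P x - ubar) + ubar ∧
      min (min ((M - ubar) / (M' - ubar)) ((ubar - m) / (ubar - m'))) 1
            * (P x - ubar) + ubar ≤ M := by
  intro x hx
  set θ := min (min ((M - ubar) / (M' - ubar)) ((ubar - m) / (ubar - m'))) 1
  have hθ_nonneg : 0 ≤ θ :=
    le_min (le_min (div_nonneg (sub_nonneg.2 hM) (sub_pos.2 hMgt).le)
      (div_nonneg (sub_nonneg.2 hm) (sub_pos.2 hmlt).le)) zero_le_one
  have hθ_upper : θ ≤ (M - ubar) / (M' - ubar) := (min_le_left _ _).trans (min_le_left _ _)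
  have hθ_lower : θ ≤ (ubar - m) / (ubar - m') := (min_le_left _ _).trans (min_le_right _ _)
  exact ⟨le_mul_sub_add_of_le_div hθ_nonneg hmlt (hm'.2 ⟨x, hx, rfl⟩) hθ_lower,
    mul_sub_add_le_of_le_div hθ_nonneg hMgt (hM'.2 ⟨x, hx, rfl⟩) hθ_upper⟩

/-- Key property of the Zhang–Shu a priori limiter: if `P` is continuous on `S`,
`M'` is the maximum and `m'` the minimum of `P` on `S`, with `m' < ū < M'`
(values on both sides of `ū`), and `m ≤ ū ≤ M`, then the limited function
`P̃(x) = θ(P(x) - ū) + ū` with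
`θ = min((M - ū)/(M' - ū), (ū - m)/(ū - m'), 1)` satisfies `m ≤ P̃(x) ≤ M` on `S`. -/
theorem zhang_shu_limited_values_in_bounds
    (S : Set ℝ) (P : ℝ → ℝ) (hP : ContinuousOn P S)
    (ubar m M m' M' : ℝ)
    (hM' : IsGreatest (P '' S) M') (hm' : IsLeast (P '' S) m')
    (hm'le : m' ≤ ubar) (hleM' : ubar ≤ M')
    (hm : m ≤ ubar) (hM : ubar ≤ M)
    (hMgt : M' > ubar) (hmlt : m' < ubar) :
    ∀ x ∈ S,
      m ≤ min (min ((M - ubar) / (M' - ubar)) ((ubar - m) / (ubar - m'))) 1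
            * (P x - ubar) + ubar ∧
      min (min ((M - ubar) / (M' - ubar)) ((ubar - m) / (ubar - m'))) 1
            * (P x - ubar) + ubar ≤ M :=
  zhang_shu_limited_values_in_bounds_general S P ubar m M m' M' hM' hm' hm hM hMgt hmlt
end
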